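/- arXiv:2405.13917 — 2 statements merged into one kernel-verified Lean document; each statement's English description precedes it below -/
import Mathlib

section
/- If α⁺ = (U⁺)² − γ(P⁺)^{γ−1} ≤ 0 (subsonic or sonic end state), μ > 0, k > 0, then for every ξ ∈ ℝ, both roots λ of the quadratic λ² + ξ(μξ − iβ⁺)λ − ξ²(α⁺ − k²ξ²/2) = 0 satisfy Re λ ≤ 0, and Re λ < 0 whenever ξ ≠ 0. -/
open Complex

/-- Stability of the essential spectrum (subsonic or sonic end state): every
root of the dispersion relation has nonpositive real part, and negative real
part when `ξ ≠ 0`. -/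
theorem dispersion_roots_stable_linear_viscosity
    (μ k αp βp ξ : ℝ) (hμ : 0 < μ) (hk : 0 < k) (hα : αp ≤ 0) (lam : ℂ)
    (hroot : lam ^ 2 + (ξ : ℂ) * ((μ : ℂ) * (ξ : ℂ) - Complex.I * (βp : ℂ)) * lam
        - (ξ : ℂ) ^ 2 * ((αp : ℂ) - (k : ℂ) ^ 2 * (ξ : ℂ) ^ 2 / 2) = 0) :
    lam.re ≤ 0 ∧ (ξ ≠ 0 → lam.re < 0) := by
  have hre := congrArg Complex.re hroot
  have him := congrArg Complex.im hroot
  set x := lam.re with hx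
  set y := lam.im with hy
  simp [Complex.ext_iff, pow_two, Complex.mul_re, Complex.mul_im, Complex.sub_re,
    Complex.sub_im, Complex.add_re, Complex.add_im] at hre him
  rw [← hx, ← hy] at hre him
  have hc : 0 ≤ ξ ^ 2 * (-αp + k ^ 2 * ξ ^ 2 / 2) := by
    apply mul_nonneg (sq_nonneg _)
    nlinarith [sq_nonneg (k * ξ)]
  have key : x ^ 3 + x * y ^ 2 + μ * ξ ^ 2 * (x ^ 2 + y ^ 2)
      + ξ ^ 2 * (-αp + k ^ 2 * ξ ^ 2 / 2) * x = 0 := by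
    linear_combination x * hre + y * him
  have h1 : x ≤ 0 := by
    by_contra h
    push_neg at h
    nlinarith [key, mul_nonneg hc h.le, mul_pos (mul_pos h h) h,
      mul_nonneg h.le (sq_nonneg y),
      mul_nonneg (mul_nonneg hμ.le (sq_nonneg ξ)) (add_nonneg (sq_nonneg x) (sq_nonneg y))]
  refine ⟨h1, fun hξ => ?_⟩
  rcases lt_or_eq_of_le h1 with h | h
  · exact h
  · exfalso
    have hx0 : x = 0 := h
    have hξ2 : 0 < ξ ^ 2 := by positivity
    have hcpos : (0:ℝ) < -αp + k ^ 2 * ξ ^ 2 / 2 := by nlinarith [mul_pos (mul_pos hk hk) hξ2]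
    have hy0 : y = 0 := by
      rw [hx0] at him
      have hμξ : 0 < μ * ξ ^ 2 := mul_pos hμ hξ2
      nlinarith [him, sq_nonneg y, mul_pos hμξ hμξ]
    rw [hx0, hy0] at hre
    nlinarith [hre, mul_pos hξ2 hcpos]
end

section
/- For the dispersion relation λ² + (μξ² + 2U⁺ξ i)λ + c(ξ) = 0 with c(ξ) = (R⁺h'(R⁺) − (U⁺)²)ξ² + (k²/2)ξ⁴, if μ > 0, k > 0 and R⁺h'(R⁺) − (U⁺)² ≥ 0, then both roots satisfy Re λ ≤ 0, with strict inequality for ξ ≠ 0. -/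
open Complex

set_option maxHeartbeats 800000 in
/-- Stability of the essential spectrum for the nonlinear-viscosity system:
if `R⁺h'(R⁺) − (U⁺)² ≥ 0` then every root of the dispersion relation has
nonpositive real part, with strict inequality for `ξ ≠ 0`. -/
theorem dispersion_roots_stable_nonlinear_viscosity
    (μ k Rp Up hR ξ : ℝ) (hμ : 0 < μ) (hk : 0 < k)
    (ha : 0 ≤ Rp * hR - Up ^ 2) (lam : ℂ)
    (hroot : lam ^ 2 + ((μ : ℂ) * (ξ : ℂ) ^ 2 + 2 * (Up : ℂ) * (ξ : ℂ) * Complex.I) * lam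
        + ((Rp : ℂ) * (hR : ℂ) - (Up : ℂ) ^ 2) * (ξ : ℂ) ^ 2
        + ((k : ℂ) ^ 2 / 2) * (ξ : ℂ) ^ 4 = 0) :
    lam.re ≤ 0 ∧ (ξ ≠ 0 → lam.re < 0) := by
  set x := lam.re with hx
  set y := lam.im with hy
  have hre := congrArg Complex.re hroot
  have him := congrArg Complex.im hroot
  simp [Complex.ext_iff, pow_two, pow_succ, Complex.mul_re, Complex.mul_im, Complex.div_re, Complex.div_im, Complex.normSq] at hre him
  have hRe : x^2 - y^2 + μ*ξ^2*x - 2*Up*ξ*y + (Rp*hR - Up^2)*ξ^2 + k^2/2*ξ^4 = 0 := by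
    ring_nf at hre ⊢; linarith
  have hIm : y*(2*x + μ*ξ^2) + 2*Up*ξ*x = 0 := by
    ring_nf at him ⊢; linarith
  clear hre him hroot
  have main : ∀ _ : ξ ≠ 0, x < 0 := by
    intro hξ
    by_contra hc
    push_neg at hc
    have hξ2 : 0 < ξ^2 := by positivity
    have hD : 0 < 2*x + μ*ξ^2 := by nlinarith
    have h1 : y*(2*x + μ*ξ^2) = -(2*Up*ξ*x) := by linarith
    have hP : 0 < x^2 + μ*ξ^2*x + (Rp*hR - Up^2)*ξ^2 + k^2/2*ξ^4 := by
      have h4 : 0 < k^2/2*ξ^4 := by positivity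
      nlinarith [mul_nonneg (mul_nonneg hμ.le hξ2.le) hc, mul_nonneg ha hξ2.le, sq_nonneg x]
    have h2 : y^2 + 2*Up*ξ*y = x^2 + μ*ξ^2*x + (Rp*hR - Up^2)*ξ^2 + k^2/2*ξ^4 := by
      linarith
    have key : (x^2 + μ*ξ^2*x + (Rp*hR - Up^2)*ξ^2 + k^2/2*ξ^4) * (2*x + μ*ξ^2)^2
        = -(4*Up^2*ξ^2*x*(x + μ*ξ^2)) := by
      rw [← h2]
      have e : (y^2 + 2*Up*ξ*y) * (2*x + μ*ξ^2)^2
          = (y*(2*x + μ*ξ^2))^2 + 2*Up*ξ*(y*(2*x + μ*ξ^2))*(2*x + μ*ξ^2) := by ring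
      rw [e, h1]; ring
    have hpos : 0 < (x^2 + μ*ξ^2*x + (Rp*hR - Up^2)*ξ^2 + k^2/2*ξ^4) * (2*x + μ*ξ^2)^2 :=
      mul_pos hP (by positivity)
    have hxμ : 0 ≤ x + μ*ξ^2 := by nlinarith
    have hrhs : 0 ≤ 4*Up^2*ξ^2*x*(x + μ*ξ^2) :=
      mul_nonneg (mul_nonneg (by positivity) hc) hxμ
    linarith
  refine ⟨?_, main⟩
  rcases eq_or_ne ξ 0 with h0 | h0
  · subst h0
    simp at hRe hIm
    rcases hIm with h | h
    · rw [h] at hRe; nlinarith [sq_nonneg x]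
    · exact le_of_eq h
  · exact le_of_lt (main h0)
end
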